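/- arXiv:1506.05579 — 2 statements merged into one kernel-verified Lean document; each statement's English description precedes it below -/
import Mathlib

section
/- For a fixed newcomer v with sorted link capacities c₁ ≤ c₂ ≤ ⋯ ≤ c_d to its d providers, the flexible block assignment β*_i = c_i·M / (k·∑_{r=1}^{d-k+1} c_r) for 1 ≤ i ≤ d−k+1 and β*_i = c_{d-k+1}·M / (k·∑_{r=1}^{d-k+1} c_r) for d−k+1 < i ≤ d yields regeneration time max_i β*_i / c_i = M / (k·∑_{r=1}^{d-k+1} c_r). -/
/-!
Each provider `i ≤ d - k` receives exactly `c i · T` with `T = M / (k · ∑_{r ≤ d-k} c r)`,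
so it finishes at time `T`; the remaining providers receive the capped load `c (d-k) · T`,
and as `c (d-k) ≤ c i` they finish no later than `T`.
-/

theorem Finset.sup'_eq_of_forall_le_of_eq {α β : Type*} [SemilatticeSup β] {s : Finset α}
    (H : s.Nonempty) {f : α → β} {a : β} {i : α} (hi : i ∈ s) (hle : ∀ j ∈ s, f j ≤ a)
    (heq : f i = a) : s.sup' H f = a :=
  le_antisymm (Finset.sup'_le H f hle) (heq ▸ Finset.le_sup' f hi)

section Load

variable {x y M D : ℝ}

theorem mul_div_div_cancel_left₀ (hx : x ≠ 0) : x * M / D / x = M / D := by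
  rw [mul_div_assoc, mul_div_cancel_left₀ _ hx]

theorem mul_div_div_le_of_le (hMD : 0 ≤ M / D) (hy : 0 < y) (hxy : x ≤ y) :
    x * M / D / y ≤ M / D := by
  rw [mul_div_assoc, div_le_iff₀ hy, mul_comm]
  exact mul_le_mul_of_nonneg_left hxy hMD

end Load

/-- Indices are 0-based: `i ≤ d - k` corresponds to `1 ≤ i ≤ d - k + 1`. -/
theorem flexible_assignment_time (M : ℝ) (hM : 0 < M) (d k : ℕ) (hk : 1 ≤ k) (hkd : k ≤ d)
    (c : Fin d → ℝ) (hpos : ∀ i, 0 < c i) (hmono : Monotone c) :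
    Finset.univ.sup' (⟨⟨0, by omega⟩, Finset.mem_univ _⟩ : (Finset.univ : Finset (Fin d)).Nonempty)
      (fun i : Fin d =>
        (if (i : ℕ) ≤ d - k
          then c i * M / (k * ∑ r ∈ Finset.univ.filter (fun r : Fin d => (r : ℕ) ≤ d - k), c r)
          else c ⟨d - k, by omega⟩ * M /
            (k * ∑ r ∈ Finset.univ.filter (fun r : Fin d => (r : ℕ) ≤ d - k), c r)) / c i)
      = M / (k * ∑ r ∈ Finset.univ.filter (fun r : Fin d => (r : ℕ) ≤ d - k), c r) := by
  have hsum : 0 ≤ ∑ r ∈ Finset.univ.filter (fun r : Fin d => (r : ℕ) ≤ d - k), c r :=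
    Finset.sum_nonneg fun r _ => (hpos r).le
  have hT : 0 ≤ M / (k * ∑ r ∈ Finset.univ.filter (fun r : Fin d => (r : ℕ) ≤ d - k), c r) := by
    positivity
  refine Finset.sup'_eq_of_forall_le_of_eq _ (Finset.mem_univ ⟨0, by omega⟩)
    (fun i _ => ?_) ?_
  · split_ifs with hi
    · exact (mul_div_div_cancel_left₀ (hpos i).ne').le
    · exact mul_div_div_le_of_le hT (hpos i) (hmono (Fin.mk_le_of_le_val (by omega)))
  · rw [if_pos (Nat.zero_le _)]
    exact mul_div_div_cancel_left₀ (hpos _).ne'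
end

section
/- For a fixed newcomer j, the sum of the (d−k+1) smallest capacities among any d-subset P ⊆ V_p of links to j is maximized by taking P to be the d providers with the largest capacities c(i,j). -/
/-!
Off `P ∩ Q`, every capacity in `Q` is at most every capacity in `P`, and the two leftover parts
have the same size, so the capacities of `Q` can be paired one-to-one with those of `P`, each at
most its partner. Such a pairing survives sorting: the `i`-th smallest capacity of `Q` is at most
the `i`-th smallest capacity of `P`, hence so is every sum of the `m` smallest.
-/

/-- Sum of the `m` smallest elements of a multiset of reals. -/
noncomputable def smallSum (s : Multiset ℝ) (m : ℕ) : ℝ :=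
  ((s.sort (· ≤ ·)).take m).sum

section Preorder

variable {α : Type*} [Preorder α]

theorem List.Pairwise.head_le_of_mem {a x : α} {l : List α} (h : (a :: l).Pairwise (· ≤ ·))
    (hx : x ∈ a :: l) : a ≤ x := by
  rcases List.mem_cons.1 hx with rfl | hx
  · exact le_rfl
  · exact List.rel_of_pairwise_cons h hx

theorem Multiset.Rel.erase_of_forall_le [DecidableEq α] {s t : Multiset α}
    (hst : s.Rel (· ≤ ·) t) {a b : α} (ha : a ∈ s) (hb : b ∈ t) (hmin : ∀ y ∈ t, b ≤ y) :
    (s.erase a).Rel (· ≤ ·) (t.erase b) := by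
  rw [← Multiset.cons_erase ha] at hst
  obtain ⟨b', t', hab', hst', rfl⟩ := Multiset.rel_cons_left.1 hst
  by_cases hbb' : b = b'
  · rwa [hbb', Multiset.erase_cons_head]
  · have hb' : b ∈ t' := (Multiset.mem_cons.1 hb).resolve_left hbb'
    rw [← Multiset.cons_erase hb'] at hst'
    obtain ⟨a', s', ha'b, hs't, hs⟩ := Multiset.rel_cons_right.1 hst'
    -- `b` was matched with `a'`; since `b` is minimal, `a'` may take over the partner `b'` of `a`.
    rw [Multiset.erase_cons_tail_of_mem hb', hs]
    exact .cons (ha'b.trans (hmin b' (Multiset.mem_cons_self _ _))) hs't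

theorem List.forall₂_le_of_rel_coe :
    ∀ {l₁ l₂ : List α}, l₁.Pairwise (· ≤ ·) → l₂.Pairwise (· ≤ ·) →
      (l₁ : Multiset α).Rel (· ≤ ·) l₂ → List.Forall₂ (· ≤ ·) l₁ l₂
  | [], [], _, _, _ => .nil
  | [], _ :: _, _, _, h => by simp [Multiset.rel_zero_left] at h
  | _ :: _, [], _, _, h => by simp [Multiset.rel_zero_right] at h
  | a :: l₁, b :: l₂, h₁, h₂, h => by
    classical
    rw [← Multiset.cons_coe, ← Multiset.cons_coe] at h
    obtain ⟨a', s', ha'b, -, hs'⟩ := Multiset.rel_cons_right.1 h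
    have ha' : a' ∈ a ::ₘ (l₁ : Multiset α) := hs' ▸ Multiset.mem_cons_self a' s'
    have hab : a ≤ b := (h₁.head_le_of_mem ha').trans ha'b
    have h' := h.erase_of_forall_le (Multiset.mem_cons_self a _) (Multiset.mem_cons_self b _)
      fun _ hy ↦ h₂.head_le_of_mem hy
    rw [Multiset.erase_cons_head, Multiset.erase_cons_head] at h'
    exact .cons hab (forall₂_le_of_rel_coe h₁.of_cons h₂.of_cons h')

end Preorder

theorem Multiset.Rel.forall₂_sort {α : Type*} [LinearOrder α] {s t : Multiset α}
    (h : s.Rel (· ≤ ·) t) : List.Forall₂ (· ≤ ·) (s.sort (· ≤ ·)) (t.sort (· ≤ ·)) :=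
  List.forall₂_le_of_rel_coe (Multiset.pairwise_sort s _) (Multiset.pairwise_sort t _)
    (by rwa [Multiset.sort_eq, Multiset.sort_eq])

theorem smallSum_le_smallSum_of_rel {s t : Multiset ℝ} (h : s.Rel (· ≤ ·) t) (m : ℕ) :
    smallSum s m ≤ smallSum t m :=
  (List.forall₂_take m h.forall₂_sort).sum_le_sum

theorem Finset.rel_map_le_of_forall_le {ι α : Type*} [Preorder α] {c : ι → α}
    {P Q : Finset ι} (hcard : Q.card = P.card) (htop : ∀ i ∈ P, ∀ i' ∉ P, c i' ≤ c i) :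
    (Q.val.map c).Rel (· ≤ ·) (P.val.map c) := by
  classical
  have split (A B : Finset ι) : A.val = (A \ B).val + (A ∩ B).val := by
    rw [sdiff_val, inter_val, Multiset.sub_add_inter]
  rw [split Q P, split P Q, inter_comm P Q, Multiset.map_add, Multiset.map_add]
  refine .add (Multiset.rel_of_forall ?_ ?_) (Multiset.rel_refl_of_refl_on fun _ _ ↦ le_rfl)
  · simp only [Multiset.mem_map, mem_val, mem_sdiff]
    rintro _ _ ⟨i', ⟨-, hi'⟩, rfl⟩ ⟨i, ⟨hi, -⟩, rfl⟩
    exact htop i hi i' hi'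
  · rw [Multiset.card_map, Multiset.card_map]
    exact card_sdiff_comm hcard

theorem topd_maximizes_smallSum_general {Vp : Type*}
    (c : Vp → ℝ) (d k : ℕ)
    (P : Finset Vp) (hP : P.card = d)
    (htop : ∀ i ∈ P, ∀ i' ∉ P, c i' ≤ c i)
    (Q : Finset Vp) (hQ : Q.card = d) :
    smallSum (Q.val.map c) (d - k + 1) ≤ smallSum (P.val.map c) (d - k + 1) :=
  smallSum_le_smallSum_of_rel (Finset.rel_map_le_of_forall_le (hQ.trans hP.symm) htop) _

/-- For a fixed newcomer, the sum of the (d−k+1) smallest capacities among any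
d-subset of providers is maximized by the d providers of largest capacity. -/
theorem topd_maximizes_smallSum {Vp : Type*} [Fintype Vp] [DecidableEq Vp]
    (c : Vp → ℝ) (hpos : ∀ i, 0 < c i) (d k : ℕ) (hk : 1 ≤ k) (hkd : k ≤ d)
    (hdcard : d ≤ Fintype.card Vp)
    (P : Finset Vp) (hP : P.card = d)
    (htop : ∀ i ∈ P, ∀ i' ∉ P, c i' ≤ c i)
    (Q : Finset Vp) (hQ : Q.card = d) :
    smallSum (Q.val.map c) (d - k + 1) ≤ smallSum (P.val.map c) (d - k + 1) :=
  topd_maximizes_smallSum_general c d k P hP htop Q hQ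
end
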